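/- Let u : ℝ² → ℝ be a C² solution of L_u(L_u u) = 0 on ℝ², and suppose there is a constant A ∈ ℝ such that (L_u u)(x,0) = A for all x ∈ ℝ. Then the function x ↦ u(x,0) is constant, equal to some B ∈ ℝ, and moreover u(x,t) = A·t + B for all (x,t) ∈ ℝ². -/

import Mathlib

/-!
Along the curve `ξ(t) = x₀ + c t + A t² / 2` with `c = u(x₀, 0)` and `A = (L_u u)(x₀, 0)`, the
deviations `u(ξ t, t) - (c + A t)` and `(L_u u)(ξ t, t) - A` satisfy a linear homogeneous ODE
(because `L_u (L_u u) = 0`) with zero initial data, so both vanish: `u` is transported along these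
parabolas. When `A` does not depend on `x₀`, two such parabolas starting with different speeds
meet, which forces `u(·, 0)` to be constant; then the parabolas foliate the plane and give
`u(x, t) = A t + B`.
-/

/-- The operator `L_u` acting on `v`:  `(L_u v)(x,t) = ∂v/∂t + u·∂v/∂x`,
with coordinates `(x,t)` on `ℝ × ℝ`. -/
noncomputable def Lop (u v : ℝ × ℝ → ℝ) : ℝ × ℝ → ℝ :=
  fun p => fderiv ℝ v p (0, 1) + u p * fderiv ℝ v p (1, 0)

open Set

theorem eq_zero_of_hasDerivAt_clm_apply {E : Type*} [NormedAddCommGroup E] [NormedSpace ℝ E]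
    {M : ℝ → E →L[ℝ] E} (hM : Continuous M) {f : ℝ → E}
    (hf : ∀ t, HasDerivAt f (M t (f t)) t) {t₀ : ℝ} (hf₀ : f t₀ = 0) (t : ℝ) : f t = 0 := by
  obtain ⟨a, b, ht, ht₀⟩ : ∃ a b, t ∈ Ioo a b ∧ t₀ ∈ Ioo a b :=
    ⟨min t t₀ - 1, max t t₀ + 1, by constructor <;> constructor <;> grind⟩
  obtain ⟨K, hK⟩ := ((isCompact_Icc (a := a) (b := b)).image_of_continuousOn
    hM.nnnorm.continuousOn).bddAbove
  have hlip : ∀ s ∈ Ioo a b, LipschitzOnWith K (M s) univ := fun s hs =>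
    ((M s).lipschitz.weaken (hK ⟨s, Ioo_subset_Icc_self hs, rfl⟩)).lipschitzOnWith
  exact ODE_solution_unique_of_mem_Ioo (g := 0) hlip ht₀ (fun s _ => ⟨hf s, mem_univ _⟩)
    (fun s _ => ⟨by simp, mem_univ _⟩) hf₀ ht

theorem ContDiff.Lop {n : WithTop ℕ∞} {u v : ℝ × ℝ → ℝ} (hu : ContDiff ℝ n u)
    (hv : ContDiff ℝ (n + 1) v) : ContDiff ℝ n (Lop u v) := by
  have hDv := hv.fderiv_right le_rfl
  exact (hDv.clm_apply contDiff_const).add (hu.mul (hDv.clm_apply contDiff_const))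

theorem hasDerivAt_Lop_along {u v : ℝ × ℝ → ℝ} {ξ : ℝ → ℝ} {ξ' t : ℝ}
    (hξ : HasDerivAt ξ ξ' t) (hv : DifferentiableAt ℝ v (ξ t, t)) :
    HasDerivAt (fun s => v (ξ s, s))
      (Lop u v (ξ t, t) + (ξ' - u (ξ t, t)) * fderiv ℝ v (ξ t, t) (1, 0)) t := by
  have hcurve : HasDerivAt (fun s => (ξ s, s)) (ξ', 1) t := hξ.prodMk (hasDerivAt_id' t)
  refine (HasFDerivAt.comp_hasDerivAt (f := fun s => (ξ s, s)) t hv.hasFDerivAt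
    hcurve).congr_deriv ?_
  have hdir : ((ξ', 1) : ℝ × ℝ) = (0, 1) + ξ' • (1, 0) := by simp
  rw [hdir, map_add, map_smul, smul_eq_mul, Lop]
  ring

theorem eq_add_mul_along_characteristic {u : ℝ × ℝ → ℝ} (hu : ContDiff ℝ 2 u)
    (hpde : ∀ p, Lop u (Lop u u) p = 0) {A x₀ : ℝ} (hA : Lop u u (x₀, 0) = A) (t : ℝ) :
    u (x₀ + u (x₀, 0) * t + A * t ^ 2 / 2, t) = u (x₀, 0) + A * t := by
  set c := u (x₀, 0)
  set w := Lop u u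
  have hu₁ : ContDiff ℝ 1 u := hu.of_le one_le_two
  have hw : ContDiff ℝ 1 w := hu₁.Lop hu
  set ξ : ℝ → ℝ := fun s => x₀ + c * s + A * s ^ 2 / 2
  have hξ (s : ℝ) : HasDerivAt ξ (c + A * s) s := by
    refine ((((hasDerivAt_id' s).const_mul c).const_add x₀).add
      (((hasDerivAt_pow 2 s).const_mul A).div_const 2)).congr_deriv ?_
    ring
  have hξc : Continuous fun s => (ξ s, s) := by fun_prop
  set α : ℝ → ℝ := fun s => fderiv ℝ u (ξ s, s) (1, 0)
  set β : ℝ → ℝ := fun s => fderiv ℝ w (ξ s, s) (1, 0)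
  have hα : Continuous α :=
    ((hu₁.continuous_fderiv one_ne_zero).comp hξc).clm_apply continuous_const
  have hβ : Continuous β :=
    ((hw.continuous_fderiv one_ne_zero).comp hξc).clm_apply continuous_const
  -- the matrix `!![-α s, 1; -β s, 0]`
  open ContinuousLinearMap in
  set M : ℝ → ℝ × ℝ →L[ℝ] ℝ × ℝ := fun s =>
    (-α s) • (inl ℝ ℝ ℝ ∘L fst ℝ ℝ ℝ) + inl ℝ ℝ ℝ ∘L snd ℝ ℝ ℝ + (-β s) • (inr ℝ ℝ ℝ ∘L fst ℝ ℝ ℝ)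
  have hM : Continuous M := by fun_prop
  set f : ℝ → ℝ × ℝ := fun s => (u (ξ s, s) - (c + A * s), w (ξ s, s) - A)
  have hf (s : ℝ) : HasDerivAt f (M s (f s)) s := by
    have hus := (hasDerivAt_Lop_along (u := u) (hξ s) (hu₁.differentiable one_ne_zero _)).sub
      (((hasDerivAt_id' s).const_mul A).const_add c)
    have hws :=
      (hasDerivAt_Lop_along (u := u) (hξ s) (hw.differentiable one_ne_zero _)).sub_const A
    refine (hus.prodMk hws).congr_deriv ?_
    simp only [M, f, α, β, hpde]
    ext <;> simp <;> ring
  have hf₀ : f 0 = 0 := by simp [f, ξ, hA, c]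
  have := congrArg Prod.fst (eq_zero_of_hasDerivAt_clm_apply hM hf hf₀ t)
  simp only [f, Prod.fst_zero, sub_eq_zero] at this
  exact this

theorem initial_eq_of_characteristics {u : ℝ × ℝ → ℝ} {A : ℝ}
    (hchar : ∀ x₀ t, u (x₀ + u (x₀, 0) * t + A * t ^ 2 / 2, t) = u (x₀, 0) + A * t) (x y : ℝ) :
    u (x, 0) = u (y, 0) := by
  by_contra hne
  set t := (y - x) / (u (x, 0) - u (y, 0))
  have hmeet : x + u (x, 0) * t = y + u (y, 0) * t := by
    have : (u (x, 0) - u (y, 0)) * t = y - x := mul_div_cancel₀ _ (sub_ne_zero.mpr hne)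
    linarith
  have hx := hchar x t
  rw [hmeet, hchar y t] at hx
  exact hne (by linarith)

theorem stmt4 (u : ℝ × ℝ → ℝ) (hu : ContDiff ℝ 2 u)
    (hpde : ∀ p : ℝ × ℝ, Lop u (Lop u u) p = 0)
    (A : ℝ) (hA : ∀ x : ℝ, Lop u u (x, 0) = A) :
    ∃ B : ℝ, (∀ x : ℝ, u (x, 0) = B) ∧ ∀ x t : ℝ, u (x, t) = A * t + B := by
  have hchar x₀ t := eq_add_mul_along_characteristic hu hpde (hA x₀) t
  have hB x := initial_eq_of_characteristics hchar x 0
  refine ⟨u (0, 0), hB, fun x t => ?_⟩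
  obtain ⟨x₀, hx₀⟩ : ∃ x₀, x₀ + u (0, 0) * t + A * t ^ 2 / 2 = x :=
    ⟨x - u (0, 0) * t - A * t ^ 2 / 2, by ring⟩
  have h := hchar x₀ t
  rw [hB x₀, hx₀] at h
  rw [h, add_comm]
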